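/- Under the regularized gradient flow of the previous statement, ‖W_ℓ²(t) − W_{ℓ+1}²(t)‖ ≤ exp(−4η^{2L−2} t) · ‖W_ℓ²(0) − W_{ℓ+1}²(0)‖ for all t ≥ 0 and each ℓ = 1,...,L−1. -/

import Mathlib

/-!
Fix a diagonal entry `h` and write `a = w ℓ h`, `b = w ℓ' h`. Along the flow,
`d/dt a² = 4 W*_h ∏_r w_r h − 4 a² ∏_{r ≠ ℓ} (w_r h² + η²)`. The data term is the same for every
layer, and the regularizer contributes `a²(b² + η²) Q` resp. `b²(a² + η²) Q` with
`Q = ∏_{r ≠ ℓ, ℓ'} (w_r h² + η²) ≥ η^(2L−4)`, so the gap `g = a² − b²` obeys `g' = −4η² Q g`.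
Hence `exp(2Ks) g(s)²` is nonincreasing for `K = 4η^(2L−2)`; summing over `h` gives the bound.
-/

open Finset

/-- The regularized loss `L_R(W₁,…,W_L) = ‖W* − W_L⋯W₁‖² + Tr(∏(W_ℓ²+η²I) − ∏W_ℓ²)`
for diagonal matrices `W_ℓ = diagonal (v ℓ)` and `W* = diagonal Wstar`, expressed in terms
of the diagonal entries. -/
def diagRegLoss (d L : ℕ) (η : ℝ) (Wstar : Fin d → ℝ) (v : Fin L → Fin d → ℝ) : ℝ :=
  (∑ h, (Wstar h - ∏ ℓ, v ℓ h) ^ 2) +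
    ∑ h, ((∏ ℓ, ((v ℓ h) ^ 2 + η ^ 2)) - ∏ ℓ, (v ℓ h) ^ 2)

def coordRegLoss {L : ℕ} (η c : ℝ) (x : Fin L → ℝ) : ℝ :=
  (c - ∏ r, x r) ^ 2 + (∏ r, (x r ^ 2 + η ^ 2) - ∏ r, x r ^ 2)

def IsRegGradientFlow (d L : ℕ) (η : ℝ) (Wstar : Fin d → ℝ) (w : ℝ → Fin L → Fin d → ℝ) :
    Prop :=
  ∀ t (ℓ : Fin L) (h : Fin d),
    HasDerivAt (fun s => w s ℓ h)
      (-(deriv (fun x => diagRegLoss d L η Wstar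
          (Function.update (w t) ℓ (Function.update (w t ℓ) h x))) (w t ℓ h))) t

section Loss

variable {d L : ℕ} {η : ℝ}

theorem diagRegLoss_eq_sum_coordRegLoss (Wstar : Fin d → ℝ) (v : Fin L → Fin d → ℝ) :
    diagRegLoss d L η Wstar v = ∑ h, coordRegLoss η (Wstar h) (fun r => v r h) := by
  simp only [diagRegLoss, coordRegLoss, sum_add_distrib]

theorem coordRegLoss_update (c : ℝ) (x : Fin L → ℝ) (ℓ : Fin L) (y : ℝ) :
    coordRegLoss η c (Function.update x ℓ y) =
      (c - y * ∏ r ∈ univ.erase ℓ, x r) ^ 2 +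
        ((y ^ 2 + η ^ 2) * ∏ r ∈ univ.erase ℓ, (x r ^ 2 + η ^ 2)
          - (y * ∏ r ∈ univ.erase ℓ, x r) ^ 2) := by
  have hprod (f : ℝ → ℝ) :
      ∏ r, f (Function.update x ℓ y r) = f y * ∏ r ∈ univ.erase ℓ, f (x r) := by
    rw [← Function.comp_def f, Function.comp_update, prod_update_of_mem (mem_univ ℓ),
      sdiff_singleton_eq_erase, Function.comp_def]
  simp only [coordRegLoss, hprod (fun z => z), hprod (fun z => z ^ 2 + η ^ 2),
    hprod (fun z => z ^ 2), mul_pow, prod_pow]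

theorem hasDerivAt_coordRegLoss_update (c : ℝ) (x : Fin L → ℝ) (ℓ : Fin L) (y : ℝ) :
    HasDerivAt (fun y => coordRegLoss η c (Function.update x ℓ y))
      (2 * (y * ∏ r ∈ univ.erase ℓ, (x r ^ 2 + η ^ 2) - c * ∏ r ∈ univ.erase ℓ, x r)) y := by
  simp only [coordRegLoss_update]
  set P := ∏ r ∈ univ.erase ℓ, x r
  set D := ∏ r ∈ univ.erase ℓ, (x r ^ 2 + η ^ 2)
  have hlin : HasDerivAt (fun y => y * P) P y := by simpa using (hasDerivAt_id y).mul_const P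
  have hsq : HasDerivAt (fun y : ℝ => y ^ 2) (2 * y) y := by simpa using hasDerivAt_pow 2 y
  refine (((hlin.const_sub c).fun_pow 2).add
    (((hsq.add_const (η ^ 2)).mul_const D).sub (hlin.fun_pow 2))).congr_deriv ?_
  norm_num
  ring

theorem hasDerivAt_diagRegLoss_update (Wstar : Fin d → ℝ) (v : Fin L → Fin d → ℝ) (ℓ : Fin L)
    (h : Fin d) (y : ℝ) :
    HasDerivAt (fun y => diagRegLoss d L η Wstar (Function.update v ℓ (Function.update (v ℓ) h y)))
      (2 * (y * ∏ r ∈ univ.erase ℓ, (v r h ^ 2 + η ^ 2) - Wstar h * ∏ r ∈ univ.erase ℓ, v r h))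
      y := by
  have hcol (y : ℝ) :
      (fun r => Function.update v ℓ (Function.update (v ℓ) h y) r h) =
        Function.update (fun r => v r h) ℓ y := by
    ext r
    rcases eq_or_ne r ℓ with rfl | hr <;> simp [*]
  have hcol' (y : ℝ) {h' : Fin d} (hh' : h' ≠ h) :
      (fun r => Function.update v ℓ (Function.update (v ℓ) h y) r h') = fun r => v r h' := by
    ext r
    rcases eq_or_ne r ℓ with rfl | hr <;> simp [*]
  have hsplit : (fun y => diagRegLoss d L η Wstar (Function.update v ℓ (Function.update (v ℓ) h y)))
      = fun y => coordRegLoss η (Wstar h) (Function.update (fun r => v r h) ℓ y) +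
          ∑ h' ∈ univ.erase h, coordRegLoss η (Wstar h') (fun r => v r h') := by
    ext y
    rw [diagRegLoss_eq_sum_coordRegLoss, ← add_sum_erase _ _ (mem_univ h), hcol]
    exact congrArg _ (sum_congr rfl fun h' hh' => by rw [hcol' y (ne_of_mem_erase hh')])
  rw [hsplit]
  exact (hasDerivAt_coordRegLoss_update _ _ ℓ y).add_const _

end Loss

section Flow

variable {d L : ℕ} {η : ℝ} {Wstar : Fin d → ℝ} {w : ℝ → Fin L → Fin d → ℝ}

theorem IsRegGradientFlow.hasDerivAt (hw : IsRegGradientFlow d L η Wstar w) (ℓ : Fin L)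
    (h : Fin d) (s : ℝ) :
    HasDerivAt (fun s => w s ℓ h)
      (2 * (Wstar h * ∏ r ∈ univ.erase ℓ, w s r h
        - w s ℓ h * ∏ r ∈ univ.erase ℓ, (w s r h ^ 2 + η ^ 2))) s := by
  have hws := hw s ℓ h
  rw [(hasDerivAt_diagRegLoss_update Wstar (w s) ℓ h _).deriv] at hws
  convert hws using 1
  ring

theorem IsRegGradientFlow.hasDerivAt_sq_sub_sq (hw : IsRegGradientFlow d L η Wstar w)
    {ℓ ℓ' : Fin L} (hne : ℓ ≠ ℓ') (h : Fin d) (s : ℝ) :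
    HasDerivAt (fun t => w t ℓ h ^ 2 - w t ℓ' h ^ 2)
      (-(4 * η ^ 2 * ∏ r ∈ (univ.erase ℓ).erase ℓ', (w s r h ^ 2 + η ^ 2))
        * (w s ℓ h ^ 2 - w s ℓ' h ^ 2)) s := by
  have hℓ' : ℓ' ∈ univ.erase ℓ := mem_erase.2 ⟨hne.symm, mem_univ _⟩
  have hℓ : ℓ ∈ univ.erase ℓ' := mem_erase.2 ⟨hne, mem_univ _⟩
  have hprod : w s ℓ h * ∏ r ∈ univ.erase ℓ, w s r h = w s ℓ' h * ∏ r ∈ univ.erase ℓ', w s r h := by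
    rw [mul_prod_erase univ (fun r => w s r h) (mem_univ ℓ),
      mul_prod_erase univ (fun r => w s r h) (mem_univ ℓ')]
  have hD : ∏ r ∈ univ.erase ℓ, (w s r h ^ 2 + η ^ 2) =
      (w s ℓ' h ^ 2 + η ^ 2) * ∏ r ∈ (univ.erase ℓ).erase ℓ', (w s r h ^ 2 + η ^ 2) :=
    (mul_prod_erase _ _ hℓ').symm
  have hD' : ∏ r ∈ univ.erase ℓ', (w s r h ^ 2 + η ^ 2) =
      (w s ℓ h ^ 2 + η ^ 2) * ∏ r ∈ (univ.erase ℓ).erase ℓ', (w s r h ^ 2 + η ^ 2) := by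
    rw [erase_right_comm, mul_prod_erase _ (fun r => w s r h ^ 2 + η ^ 2) hℓ]
  refine (((hw.hasDerivAt ℓ h s).fun_pow 2).sub ((hw.hasDerivAt ℓ' h s).fun_pow 2)).congr_deriv ?_
  rw [hD, hD']
  norm_num
  linear_combination (4 * Wstar h) * hprod

end Flow

theorem pow_le_mul_prod_erase_erase {L : ℕ} {ℓ ℓ' : Fin L} (hne : ℓ ≠ ℓ') (η : ℝ)
    (x : Fin L → ℝ) :
    η ^ (2 * L - 2) ≤ η ^ 2 * ∏ r ∈ (univ.erase ℓ).erase ℓ', (x r ^ 2 + η ^ 2) := by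
  have hL : 2 ≤ L := by
    have := Fin.val_ne_of_ne hne
    omega
  have hcard : ((univ.erase ℓ).erase ℓ').card = L - 2 := by
    rw [card_erase_of_mem (mem_erase.2 ⟨hne.symm, mem_univ _⟩), card_erase_of_mem (mem_univ _),
      card_univ, Fintype.card_fin]
    omega
  calc η ^ (2 * L - 2) = η ^ 2 * ∏ _r ∈ (univ.erase ℓ).erase ℓ', η ^ 2 := by
        rw [prod_const, hcard, ← pow_mul, ← pow_add]
        congr 1
        omega
    _ ≤ _ := by
        gcongr with r
        exact le_add_of_nonneg_left (sq_nonneg _)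

theorem abs_le_exp_mul_abs_of_hasDerivAt {g k : ℝ → ℝ} {K : ℝ}
    (hg : ∀ s, HasDerivAt g (-k s * g s) s) (hK : ∀ s, K ≤ k s) {t : ℝ} (ht : 0 ≤ t) :
    |g t| ≤ Real.exp (-K * t) * |g 0| := by
  have hu : ∀ s, HasDerivAt (fun s => Real.exp (2 * K * s) * g s ^ 2)
      (Real.exp (2 * K * s) * (2 * (K - k s) * g s ^ 2)) s := by
    intro s
    have he : HasDerivAt (fun s => Real.exp (2 * K * s)) (Real.exp (2 * K * s) * (2 * K)) s := by
      simpa using ((hasDerivAt_id s).const_mul (2 * K)).exp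
    refine (he.mul ((hg s).fun_pow 2)).congr_deriv ?_
    norm_num
    ring
  have hanti := antitone_of_hasDerivAt_nonpos hu fun s =>
    mul_nonpos_of_nonneg_of_nonpos (Real.exp_nonneg _)
      (mul_nonpos_of_nonpos_of_nonneg (by linarith [hK s]) (sq_nonneg _))
  have hdecay : Real.exp (2 * K * t) * g t ^ 2 ≤ g 0 ^ 2 := by simpa using hanti ht
  have hexp : Real.exp (-K * t) ^ 2 * Real.exp (2 * K * t) = 1 := by
    rw [← Real.exp_nat_mul, ← Real.exp_add]
    ring_nf
    exact Real.exp_zero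
  rw [← sq_le_sq₀ (abs_nonneg _) (by positivity), mul_pow, sq_abs, sq_abs]
  calc g t ^ 2 = Real.exp (-K * t) ^ 2 * (Real.exp (2 * K * t) * g t ^ 2) := by
        rw [← mul_assoc, hexp, one_mul]
    _ ≤ _ := by gcongr

theorem sqrt_sum_sq_le_mul_of_abs_le {ι : Type*} (s : Finset ι) {f g : ι → ℝ} {c : ℝ}
    (hc : 0 ≤ c) (hfg : ∀ i ∈ s, |f i| ≤ c * |g i|) :
    √(∑ i ∈ s, f i ^ 2) ≤ c * √(∑ i ∈ s, g i ^ 2) := by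
  rw [← Real.sqrt_sq hc, ← Real.sqrt_mul (sq_nonneg c), mul_sum]
  gcongr with i hi
  calc f i ^ 2 = |f i| ^ 2 := (sq_abs _).symm
    _ ≤ (c * |g i|) ^ 2 := pow_le_pow_left₀ (abs_nonneg _) (hfg i hi) 2
    _ = c ^ 2 * g i ^ 2 := by rw [mul_pow, sq_abs]

theorem balancing_exponential_decay_regularized_flow_general
    (d L : ℕ) (η : ℝ)
    (Wstar : Fin d → ℝ) (w : ℝ → Fin L → Fin d → ℝ)
    (hflow : ∀ t (ℓ : Fin L) (h : Fin d),
      HasDerivAt (fun s => w s ℓ h)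
        (-(deriv (fun x => diagRegLoss d L η Wstar
            (Function.update (w t) ℓ (Function.update (w t ℓ) h x))) (w t ℓ h))) t)
    (ℓ ℓ' : Fin L) (hsucc : (ℓ' : ℕ) = (ℓ : ℕ) + 1) :
    ∀ t : ℝ, 0 ≤ t →
      Real.sqrt (∑ h, ((w t ℓ h) ^ 2 - (w t ℓ' h) ^ 2) ^ 2)
        ≤ Real.exp (-(4 * η ^ (2 * L - 2)) * t) *
            Real.sqrt (∑ h, ((w 0 ℓ h) ^ 2 - (w 0 ℓ' h) ^ 2) ^ 2) := by
  intro t ht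
  have hne : ℓ ≠ ℓ' := Fin.ne_of_val_ne (by omega)
  have hw : IsRegGradientFlow d L η Wstar w := hflow
  refine sqrt_sum_sq_le_mul_of_abs_le _ (Real.exp_nonneg _) fun h _ => ?_
  refine abs_le_exp_mul_abs_of_hasDerivAt (hw.hasDerivAt_sq_sub_sq hne h) (fun s => ?_) ht
  linarith [pow_le_mul_prod_erase_erase hne η (fun r => w s r h)]

/-- Along the gradient flow of the regularized loss, the balancing gap between
consecutive layers decays exponentially:
`‖W_ℓ²(t) − W_{ℓ+1}²(t)‖ ≤ exp(−4η^{2L−2} t) ‖W_ℓ²(0) − W_{ℓ+1}²(0)‖` (Frobenius norm). -/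
theorem balancing_exponential_decay_regularized_flow
    (d L : ℕ) (hd : 1 ≤ d) (hL : 2 ≤ L) (η : ℝ) (hη : 0 < η)
    (Wstar : Fin d → ℝ) (w : ℝ → Fin L → Fin d → ℝ)
    (hflow : ∀ t (ℓ : Fin L) (h : Fin d),
      HasDerivAt (fun s => w s ℓ h)
        (-(deriv (fun x => diagRegLoss d L η Wstar
            (Function.update (w t) ℓ (Function.update (w t ℓ) h x))) (w t ℓ h))) t)
    (ℓ ℓ' : Fin L) (hsucc : (ℓ' : ℕ) = (ℓ : ℕ) + 1) :
    ∀ t : ℝ, 0 ≤ t →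
      Real.sqrt (∑ h, ((w t ℓ h) ^ 2 - (w t ℓ' h) ^ 2) ^ 2)
        ≤ Real.exp (-(4 * η ^ (2 * L - 2)) * t) *
            Real.sqrt (∑ h, ((w 0 ℓ h) ^ 2 - (w 0 ℓ' h) ^ 2) ^ 2) :=
  balancing_exponential_decay_regularized_flow_general d L η Wstar w hflow ℓ ℓ' hsucc
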